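/- arXiv:math/0504475 — 6 statements merged into one kernel-verified Lean document; each statement's English description precedes it below -/
import Mathlib

section
/- Let R be an algebra over a field K of characteristic zero, δ a K-derivation of R with δ(x) = 1 for some x ∈ R, and C = ker δ. Then for every n ≥ 0, N(δ, n, R) = ⨁_{i=0}^{n} C x^i, where N(δ, n, R) = {a ∈ R : δ^{n+1}(a) = 0}. In particular, the nil-algebra N(δ, R) equals the subalgebra generated by C and x. -/
section Aux

variable {K R : Type*} [Field K] [CharZero K] [Ring R] [Algebra K R]
variable (δ : Module.End K R) (hδ : ∀ a b : R, δ (a * b) = δ a * b + a * δ b)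
include hδ

lemma d_one' : δ 1 = 0 := by
  have h := hδ 1 1
  simp only [mul_one, one_mul] at h
  exact (left_eq_add.mp h)

lemma d_xpow (x : R) (hx : δ x = 1) : ∀ i : ℕ, δ (x ^ (i+1)) = (i+1) • x ^ i := by
  intro i
  induction i with
  | zero => simpa using hx
  | succ i ih =>
    rw [pow_succ' x (i+1), hδ, hx, ih, one_mul, mul_smul_comm, ← pow_succ' x i,
      succ_nsmul (x ^ (i+1)) (i+1)]
    exact add_comm _ _

lemma d_cxpow (x : R) (hx : δ x = 1) (c : R) (hc : δ c = 0) (i : ℕ) :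
    δ (c * x ^ (i+1)) = (i+1) • (c * x ^ i) := by
  rw [hδ, hc, zero_mul, zero_add, d_xpow δ hδ x hx, mul_smul_comm]

lemma nil_mono (m k : ℕ) (a : R) (h : (δ ^ m) a = 0) : (δ ^ (k + m)) a = 0 := by
  rw [pow_add, Module.End.mul_apply, h, map_zero]

lemma nil_mul : ∀ (n m k : ℕ), m + k = n → ∀ a b : R, (δ^m) a = 0 → (δ^k) b = 0 →
    (δ^n) (a * b) = 0 := by
  intro n
  induction n with
  | zero =>
    intro m k hmk a b ha hb
    have hm : m = 0 := by omega
    subst hm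
    simp only [pow_zero, Module.End.one_apply] at ha
    simp [ha]
  | succ n ih =>
    intro m k hmk a b ha hb
    match m, k with
    | 0, _ =>
      simp only [pow_zero, Module.End.one_apply] at ha
      simp [ha]
    | _+1, 0 =>
      simp only [pow_zero, Module.End.one_apply] at hb
      simp [hb]
    | m+1, k+1 =>
      have h1 : (δ ^ (n+1)) (a * b) = (δ ^ n) (δ (a * b)) := by
        rw [pow_succ, Module.End.mul_apply]
      rw [h1, hδ, map_add]
      have e1 : (δ ^ n) (δ a * b) = 0 := by
        apply ih m (k+1) (by omega)
        · rw [← Module.End.mul_apply, ← pow_succ]; exact ha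
        · exact hb
      have e2 : (δ ^ n) (a * δ b) = 0 := by
        apply ih (m+1) k (by omega)
        · exact ha
        · rw [← Module.End.mul_apply, ← pow_succ]; exact hb
      rw [e1, e2, add_zero]

lemma exist_rep (x : R) (hx : δ x = 1) :
    ∀ (n : ℕ) (a : R), (δ ^ (n+1)) a = 0 →
      ∃ c : Fin (n+1) → R, (∀ i, δ (c i) = 0) ∧ a = ∑ i, c i * x ^ (i:ℕ) := by
  intro n
  induction n with
  | zero =>
    intro a ha
    refine ⟨fun _ => a, fun i => by simpa using ha, by simp⟩
  | succ n ih =>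
    intro a ha
    have hda : (δ ^ (n+1)) (δ a) = 0 := by
      rw [← Module.End.mul_apply, ← pow_succ]; exact ha
    obtain ⟨b, hb, hbs⟩ := ih (δ a) hda
    set c' : Fin (n+1) → R := fun i => ((((i:ℕ):K)+1))⁻¹ • b i with hc'
    have hdc' : ∀ i, δ (c' i) = 0 := by
      intro i; rw [hc']; simp [map_smul, hb i]
    set s : R := ∑ i : Fin (n+1), c' i * x ^ ((i:ℕ)+1) with hs
    have hds : δ s = δ a := by
      rw [hs, map_sum, hbs]
      apply Finset.sum_congr rfl
      intro i _
      have hne : (((i:ℕ):K)+1) ≠ 0 := by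
        have : (((i:ℕ)+1 : ℕ) : K) ≠ 0 := Nat.cast_ne_zero.mpr (by omega)
        simpa using this
      rw [d_cxpow δ hδ x hx _ (hdc' i), hc']
      rw [smul_mul_assoc, ← Nat.cast_smul_eq_nsmul K ((i:ℕ)+1), smul_smul]
      push_cast
      rw [mul_inv_cancel₀ hne, one_smul]
    refine ⟨Fin.cases (a - s) (fun i => c' i), ?_, ?_⟩
    · intro i
      refine Fin.cases ?_ (fun j => ?_) i
      · simp only [Fin.cases_zero]
        rw [map_sub, hds, sub_self]
      · simpa using hdc' j
    · rw [Fin.sum_univ_succ]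
      simp only [Fin.cases_zero, Fin.cases_succ, Fin.val_zero, pow_zero, mul_one,
        Fin.val_succ]
      rw [hs]
      abel

lemma zero_rep (x : R) (hx : δ x = 1) :
    ∀ (n : ℕ) (c : Fin (n+1) → R), (∀ i, δ (c i) = 0) →
      ∑ i, c i * x ^ (i:ℕ) = 0 → ∀ i, c i = 0 := by
  intro n
  induction n with
  | zero =>
    intro c hc hsum i
    fin_cases i
    simpa using hsum
  | succ n ih =>
    intro c hc hsum
    have hsplit : c 0 + ∑ i : Fin (n+1), c i.succ * x ^ ((i:ℕ)+1) = 0 := by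
      have he := Fin.sum_univ_succ (f := fun i : Fin (n+2) => c i * x ^ (i:ℕ))
      simp only [Fin.val_zero, pow_zero, mul_one, Fin.val_succ] at he
      rw [← he]
      exact hsum
    have hd : δ (c 0 + ∑ i : Fin (n+1), c i.succ * x ^ ((i:ℕ)+1)) = 0 := by
      rw [hsplit, map_zero]
    rw [map_add, hc 0, zero_add, map_sum] at hd
    have hd2 : ∑ i : Fin (n+1), (((i:ℕ)+1 : K)) • c i.succ * x ^ (i:ℕ) = 0 := by
      rw [← hd]
      apply Finset.sum_congr rfl
      intro i _
      rw [d_cxpow δ hδ x hx _ (hc i.succ)]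
      rw [smul_mul_assoc, ← Nat.cast_smul_eq_nsmul K ((i:ℕ)+1)]
      push_cast
      all_goals rfl
    have htail : ∀ i : Fin (n+1), (((i:ℕ)+1 : K)) • c i.succ = 0 := by
      apply ih (fun i => (((i:ℕ)+1 : K)) • c i.succ)
      · intro i; rw [map_smul, hc i.succ, smul_zero]
      · simpa using hd2
    have hcs : ∀ i : Fin (n+1), c i.succ = 0 := by
      intro i
      have hne : (((i:ℕ):K)+1) ≠ 0 := by
        have : (((i:ℕ)+1 : ℕ) : K) ≠ 0 := Nat.cast_ne_zero.mpr (by omega)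
        simpa using this
      have := htail i
      push_cast at this
      exact (smul_eq_zero.mp this).resolve_left hne
    intro i
    refine Fin.cases ?_ hcs i
    have : ∑ i : Fin (n+1), c i.succ * x ^ ((i:ℕ)+1) = 0 := by
      apply Finset.sum_eq_zero; intro i _; rw [hcs i, zero_mul]
    rw [this, add_zero] at hsplit
    exact hsplit

end Aux

/-- If `δ x = 1` and `C = ker δ`, then `N(δ,n,R) = ⨁_{i=0}^n C xⁱ` for all `n ≥ 0`, and
the nil-algebra `N(δ,R)` equals the subalgebra generated by `C` and `x`. -/
theorem stmt_5 {K R : Type*} [Field K] [CharZero K] [Ring R] [Algebra K R]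
    (δ : Module.End K R)
    (hδ : ∀ a b : R, δ (a * b) = δ a * b + a * δ b)
    (x : R) (hx : δ x = 1) :
    (∀ (n : ℕ) (a : R), (δ ^ (n + 1)) a = 0 ↔
        ∃! c : Fin (n + 1) → R, (∀ i, δ (c i) = 0) ∧ a = ∑ i, c i * x ^ (i : ℕ)) ∧
    {a : R | ∃ n : ℕ, (δ ^ (n + 1)) a = 0} =
      ↑(Algebra.adjoin K ({x} ∪ {a : R | δ a = 0})) := by
  constructor
  · intro n a
    constructor
    · intro ha
      obtain ⟨c, hc, hsum⟩ := exist_rep δ hδ x hx n a ha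
      refine ⟨c, ⟨hc, hsum⟩, ?_⟩
      intro c2 ⟨hc2, hsum2⟩
      have hz : ∀ i, (c2 - c) i = 0 := by
        apply zero_rep δ hδ x hx n
        · intro i; simp [map_sub, hc i, hc2 i]
        · have : ∑ i, (c2 - c) i * x ^ (i:ℕ) =
              (∑ i, c2 i * x ^ (i:ℕ)) - ∑ i, c i * x ^ (i:ℕ) := by
            rw [← Finset.sum_sub_distrib]
            apply Finset.sum_congr rfl
            intros; simp [sub_mul]
          rw [this, ← hsum2, ← hsum, sub_self]
      funext i
      have := hz i
      simp only [Pi.sub_apply, sub_eq_zero] at this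
      exact this
    · rintro ⟨c, ⟨hc, hsum⟩, -⟩
      rw [hsum, map_sum]
      apply Finset.sum_eq_zero
      intro i _
      have key : ∀ j : ℕ, (δ ^ (j+1)) (c i * x ^ j) = 0 := by
        intro j
        induction j with
        | zero => simp [hc i]
        | succ j ihj =>
          have h1 : (δ ^ (j+2)) (c i * x ^ (j+1)) = (δ ^ (j+1)) (δ (c i * x ^ (j+1))) := by
            rw [pow_succ, Module.End.mul_apply]
          rw [h1, d_cxpow δ hδ x hx _ (hc i), map_nsmul, ihj, smul_zero]
      have := nil_mono δ hδ ((i:ℕ)+1) (n - (i:ℕ)) _ (key (i:ℕ))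
      have heq : (n - (i:ℕ)) + ((i:ℕ)+1) = n + 1 := by omega
      rwa [heq] at this
  · ext a
    simp only [Set.mem_setOf_eq, SetLike.mem_coe]
    constructor
    · rintro ⟨n, ha⟩
      obtain ⟨c, hc, hsum⟩ := exist_rep δ hδ x hx n a ha
      rw [hsum]
      apply Subalgebra.sum_mem
      intro i _
      apply mul_mem
      · exact Algebra.subset_adjoin (Or.inr (hc i))
      · have hxm : x ∈ Algebra.adjoin K ({x} ∪ {a : R | δ a = 0}) :=
          Algebra.subset_adjoin (Set.mem_union_left _ rfl)
        exact pow_mem hxm (i:ℕ)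
    · intro ha
      induction ha using Algebra.adjoin_induction with
      | mem y hy =>
        rcases hy with hy | hy
        · exact ⟨1, by rw [hy]; simp [pow_succ, hx, d_one' δ hδ]⟩
        · exact ⟨0, by simpa using hy⟩
      | algebraMap k =>
        refine ⟨0, ?_⟩
        simp only [zero_add, pow_one]
        have : (algebraMap K R) k = k • (1:R) := Algebra.algebraMap_eq_smul_one k
        rw [this, map_smul, d_one' δ hδ, smul_zero]
      | add y z hy hz ihy ihz =>
        obtain ⟨m, hm⟩ := ihy
        obtain ⟨k, hk⟩ := ihz
        refine ⟨m + k, ?_⟩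
        rw [map_add]
        have h1 := nil_mono δ hδ (m+1) k y hm
        have h2 := nil_mono δ hδ (k+1) m z hk
        rw [show k + (m+1) = m + k + 1 by omega] at h1
        rw [show m + (k+1) = m + k + 1 by omega] at h2
        rw [h1, h2, add_zero]
      | mul y z hy hz ihy ihz =>
        obtain ⟨m, hm⟩ := ihy
        obtain ⟨k, hk⟩ := ihz
        exact ⟨m + k + 1, nil_mul δ hδ (m+k+2) (m+1) (k+1) (by omega) y z hm hk⟩
end

section
/- Let J be an m×n matrix of rank r over a field Q, and for index tuples i = (i_1 < ⋯ < i_r) and j = (j_1 < ⋯ < j_r) let Δ(i,j) denote the corresponding r×r minor of J. If i, i' are r-tuples of row indices and j, j' are r-tuples of column indices such that Δ(i,j), Δ(i',j') are both relevant, then Δ(i', j')·Δ(i, j) = Δ(i', j)·Δ(i, j'). -/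
/-!
A rank factorization `J = C * D` through `Qʳ` makes every `r × r` minor factor as
`Δ(a, b) = det C[a, :] * det D[:, b]` by multiplicativity of the determinant, so both sides of the
identity equal `det C[i', :] * det D[:, j'] * det C[i, :] * det D[:, j]`.
-/

namespace Matrix

theorem exists_eq_mul_of_rank_eq {Q : Type*} [Field Q] {m n : Type*} [Finite m] [Fintype n]
    [DecidableEq n] {r : ℕ} (J : Matrix m n Q) (hrank : J.rank = r) :
    ∃ (C : Matrix m (Fin r) Q) (D : Matrix (Fin r) n Q), J = C * D := by
  let b := Module.finBasisOfFinrankEq Q (LinearMap.range J.mulVecLin) hrank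
  refine ⟨LinearMap.toMatrix b (Pi.basisFun Q m) (LinearMap.range J.mulVecLin).subtype,
    LinearMap.toMatrix (Pi.basisFun Q n) b J.mulVecLin.rangeRestrict, ?_⟩
  rw [← LinearMap.toMatrix_comp, LinearMap.rangeRestrict, LinearMap.subtype_comp_codRestrict,
    ← toLin'_apply', ← toLin_eq_toLin', LinearMap.toMatrix_toLin]

theorem det_submatrix_mul {R : Type*} [CommRing R] {m n k : Type*} [Fintype k] [DecidableEq k]
    (C : Matrix m k R) (D : Matrix k n R) (a : k → m) (b : k → n) :
    ((C * D).submatrix a b).det = (C.submatrix a id).det * (D.submatrix id b).det := by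
  rw [submatrix_mul C D a id b Function.bijective_id, det_mul]

theorem exists_det_submatrix_eq_mul_of_rank_eq {Q : Type*} [Field Q] {m n : Type*} [Finite m]
    [Fintype n] [DecidableEq n] {r : ℕ} (J : Matrix m n Q) (hrank : J.rank = r) :
    ∃ (c : (Fin r → m) → Q) (d : (Fin r → n) → Q),
      ∀ a b, (J.submatrix a b).det = c a * d b := by
  obtain ⟨C, D, rfl⟩ := exists_eq_mul_of_rank_eq J hrank
  exact ⟨fun a => (C.submatrix a id).det, fun b => (D.submatrix id b).det,
    det_submatrix_mul C D⟩

end Matrix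

theorem stmt_7_general {Q : Type*} [Field Q] {m n r : ℕ}
    (J : Matrix (Fin m) (Fin n) Q) (hrank : J.rank = r)
    (i i' : Fin r → Fin m) (j j' : Fin r → Fin n) :
    (J.submatrix i' j').det * (J.submatrix i j).det =
      (J.submatrix i' j).det * (J.submatrix i j').det := by
  obtain ⟨c, d, hcd⟩ := J.exists_det_submatrix_eq_mul_of_rank_eq hrank
  rw [hcd, hcd, hcd, hcd]
  ring

/-- For an `m×n` matrix `J` of rank `r` over a field, the `r×r` minors satisfy
`Δ(i',j')·Δ(i,j) = Δ(i',j)·Δ(i,j')` for all `r`-tuples of row indices `i, i'`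
and column indices `j, j'`. -/
theorem stmt_7 {Q : Type*} [Field Q] {m n r : ℕ}
    (J : Matrix (Fin m) (Fin n) Q) (hrank : J.rank = r)
    (i i' : Fin r → Fin m) (j j' : Fin r → Fin n)
    (hi : StrictMono i) (hi' : StrictMono i')
    (hj : StrictMono j) (hj' : StrictMono j') :
    (J.submatrix i' j').det * (J.submatrix i j).det =
      (J.submatrix i' j).det * (J.submatrix i j').det :=
  stmt_7_general J hrank i i' j j'
end

section
/- Let J be an m×n matrix of rank r over a field Q. Call an r-tuple of row indices i nonsingular if some r×r minor Δ(i, j') is nonzero, and an r-tuple of column indices j nonsingular if some minor Δ(i', j) is nonzero. Then Δ(i, j) ≠ 0 if and only if both i is nonsingular and j is nonsingular. -/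
/-!
If `Δ(i, j') ≠ 0`, the rows of `J` indexed by `i` are linearly independent; as there are
`r = rank J` of them, they span the row space, so `J = X * J_i` for some `X`, where `J_i` is the
`r × n` matrix of those rows. Restricting to rows `i'` and columns `j` gives
`Δ(i', j) = det X_{i'} * Δ(i, j)`, hence `Δ(i', j) ≠ 0` forces `Δ(i, j) ≠ 0`.
-/

namespace Matrix

variable {m n ι : Type*}

theorem linearIndependent_rows_of_det_submatrix_ne_zero {R : Type*} [CommRing R] [IsDomain R]
    [Fintype ι] [DecidableEq ι] {A : Matrix m n R} {i : ι → m} {j : ι → n}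
    (h : (A.submatrix i j).det ≠ 0) : LinearIndependent R fun k ↦ A (i k) :=
  (linearIndependent_rows_of_det_ne_zero h).of_comp (LinearMap.funLeft R R j)

theorem mem_span_rows_of_linearIndependent {K : Type*} [Field K] [Finite m] [Fintype n]
    [Fintype ι] {A : Matrix m n K} {i : ι → m} (hi : LinearIndependent K fun k ↦ A (i k))
    (hrank : A.rank = Fintype.card ι) (a : m) :
    A a ∈ Submodule.span K (Set.range fun k ↦ A (i k)) := by
  have hle : Submodule.span K (Set.range fun k ↦ A (i k)) ≤ Submodule.span K (Set.range A.row) :=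
    Submodule.span_mono (Set.range_comp_subset_range i A.row)
  have hfinrank : Module.finrank K (Submodule.span K (Set.range A.row)) ≤
      Module.finrank K (Submodule.span K (Set.range fun k ↦ A (i k))) := by
    rw [← rank_eq_finrank_span_row, hrank, finrank_span_eq_card hi]
  rw [Submodule.eq_of_le_of_finrank_le hle hfinrank]
  exact Submodule.subset_span (Set.mem_range_self a)

theorem exists_eq_mul_submatrix_of_mem_span_rows {R : Type*} [Semiring R] [Fintype ι]
    {A : Matrix m n R} {i : ι → m}
    (hA : ∀ a, A a ∈ Submodule.span R (Set.range fun k ↦ A (i k))) :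
    ∃ X : Matrix m ι R, A = X * A.submatrix i id := by
  choose X hX using fun a ↦ (Submodule.mem_span_range_iff_exists_fun R).mp (hA a)
  refine ⟨of X, ext fun a b ↦ ?_⟩
  rw [mul_apply, ← hX a, Finset.sum_apply]
  simp

theorem det_submatrix_ne_zero_of_mem_span_rows {R : Type*} [CommRing R] [Fintype ι]
    [DecidableEq ι] {A : Matrix m n R} {i i' : ι → m} {j : ι → n}
    (hA : ∀ a, A a ∈ Submodule.span R (Set.range fun k ↦ A (i k)))
    (h : (A.submatrix i' j).det ≠ 0) : (A.submatrix i j).det ≠ 0 := by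
  obtain ⟨X, hX⟩ := exists_eq_mul_submatrix_of_mem_span_rows hA
  have hfactor : A.submatrix i' j = X.submatrix i' id * A.submatrix i j := by
    conv_lhs => rw [hX]
    rw [submatrix_mul _ _ _ id _ Function.bijective_id, submatrix_submatrix]
    rfl
  rw [hfactor, det_mul] at h
  exact right_ne_zero_of_mul h

end Matrix

/-- For an `m×n` matrix `J` of rank `r` over a field: a minor `Δ(i,j) ≠ 0` iff the row
tuple `i` is nonsingular (some `Δ(i,j') ≠ 0`) and the column tuple `j` is nonsingular
(some `Δ(i',j) ≠ 0`). -/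
theorem stmt_8 {Q : Type*} [Field Q] {m n r : ℕ}
    (J : Matrix (Fin m) (Fin n) Q) (hrank : J.rank = r)
    (i : Fin r → Fin m) (j : Fin r → Fin n)
    (hi : StrictMono i) (hj : StrictMono j) :
    (J.submatrix i j).det ≠ 0 ↔
      (∃ j' : Fin r → Fin n, StrictMono j' ∧ (J.submatrix i j').det ≠ 0) ∧
      (∃ i' : Fin r → Fin m, StrictMono i' ∧ (J.submatrix i' j).det ≠ 0) := by
  refine ⟨fun h ↦ ⟨⟨j, hj, h⟩, ⟨i, hi, h⟩⟩, ?_⟩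
  rintro ⟨⟨j', -, hij'⟩, ⟨i', -, hi'j⟩⟩
  have hrows := Matrix.linearIndependent_rows_of_det_submatrix_ne_zero hij'
  have hspan := Matrix.mem_span_rows_of_linearIndependent hrows (by rw [hrank, Fintype.card_fin])
  exact Matrix.det_submatrix_ne_zero_of_mem_span_rows hspan hi'j
end

section
/- Let 𝔇 be an algebra containing a commutative algebra A, acting faithfully on A, such that 𝔇 is generated by A and a set of derivations of A. If 𝔞 is a proper nonzero ideal of A stable under all those derivations, then 𝔞𝔇 is a proper nonzero two-sided-proper ideal of 𝔇 (in particular 𝔇 is not a simple algebra). Hence: if 𝔇 is a simple algebra, then A is a simple 𝔇-module. -/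
/-- If the subalgebra `𝔇` of `End_K(A)` generated by the multiplication operators and a set
`der` of derivations is a simple algebra, then `A` is a simple `𝔇`-module, i.e. the only
`der`-stable ideals of `A` are `0` and `A`. -/
theorem stmt_15 {K A : Type*} [Field K] [CommRing A] [Nontrivial A] [Algebra K A]
    (der : Set (Derivation K A A))
    (𝔇 : Subalgebra K (Module.End K A))
    (h𝔇 : 𝔇 = Algebra.adjoin K
      (Set.range ⇑(Algebra.lmul K A) ∪ ((fun d : Derivation K A A => d.toLinearMap) '' der)))
    (hsimple : IsSimpleRing 𝔇) :
    ∀ 𝔞 : Ideal A, (∀ δ ∈ der, ∀ x ∈ 𝔞, δ x ∈ 𝔞) → 𝔞 = ⊥ ∨ 𝔞 = ⊤ := by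
  intro 𝔞 hstab
  -- every element of 𝔇 preserves 𝔞
  have key : ∀ D : Module.End K A, D ∈ 𝔇 → ∀ x ∈ 𝔞, D x ∈ 𝔞 := by
    intro D hD
    rw [h𝔇] at hD
    induction hD using Algebra.adjoin_induction with
    | mem D hD =>
      rcases hD with ⟨a, rfl⟩ | ⟨d, hd, rfl⟩
      · intro x hx
        simpa using 𝔞.mul_mem_left a hx
      · intro x hx
        exact hstab d hd x hx
    | algebraMap r =>
      intro x hx
      rw [Module.algebraMap_end_apply, Algebra.smul_def]
      exact 𝔞.mul_mem_left _ hx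
    | add D E _ _ ihD ihE =>
      intro x hx
      exact 𝔞.add_mem (ihD x hx) (ihE x hx)
    | mul D E _ _ ihD ihE =>
      intro x hx
      exact ihD _ (ihE x hx)
  -- the two-sided ideal of operators mapping A into 𝔞
  let I : TwoSidedIdeal 𝔇 := TwoSidedIdeal.mk'
    {D : 𝔇 | ∀ a : A, (D : Module.End K A) a ∈ 𝔞}
    (by intro a; simp)
    (by intro x y hx hy a; simpa using 𝔞.add_mem (hx a) (hy a))
    (by intro x hx a; simpa using 𝔞.neg_mem (hx a))
    (by intro x y hy a
        simpa [Module.End.mul_apply] using key x.1 x.2 _ (hy a))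
    (by intro x y hx a
        simpa [Module.End.mul_apply] using hx _)
  have hmem : ∀ D : 𝔇, D ∈ I ↔ ∀ a : A, (D : Module.End K A) a ∈ 𝔞 := by
    intro D
    exact TwoSidedIdeal.mem_mk' _ _ _ _ _ _ D
  rcases hsimple.1.2 I with hI | hI
  · left
    ext x
    simp only [Ideal.mem_bot]
    constructor
    · intro hx
      have hlm : Algebra.lmul K A x ∈ 𝔇 := by
        rw [h𝔇]
        exact Algebra.subset_adjoin (Or.inl ⟨x, rfl⟩)
      have : (⟨Algebra.lmul K A x, hlm⟩ : 𝔇) ∈ I := by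
        rw [hmem]
        intro a
        simpa using 𝔞.mul_mem_right a hx
      rw [hI] at this
      have h0 : (⟨Algebra.lmul K A x, hlm⟩ : 𝔇) = 0 := this
      have := congrArg (fun D : 𝔇 => (D : Module.End K A) 1) h0
      simpa using this
    · rintro rfl; exact 𝔞.zero_mem
  · right
    have h1 : (1 : 𝔇) ∈ I := by rw [hI]; trivial
    rw [hmem] at h1
    have := h1 1
    simp only [OneMemClass.coe_one, Module.End.one_apply] at this
    exact Ideal.eq_top_of_isUnit_mem 𝔞 this isUnit_one
end

section
/- Let A be a commutative domain, finitely generated over a field K of characteristic zero, with multiplicatively closed subset S, and view D(A) ⊆ S^{-1}D(A). Given δ ∈ S^{-1}D(A) of order at most i (i.e. δ ∈ S^{-1}D(A)_i), one has δ ∈ D(A) if and only if δ(x^α) ∈ A for all multi-indices α with |α| ≤ i, where x_1,…,x_n generate A. -/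
/-- `IsDiffOp K i u` : `u` is a `K`-linear differential operator of order at most `i`. -/
def IsDiffOp (K : Type*) {R : Type*} [CommSemiring K] [CommRing R] [Algebra K R] :
    ℕ → (R →ₗ[K] R) → Prop
  | 0, u => ∃ b : R, u = LinearMap.mulLeft K b
  | i + 1, u => ∀ r : R,
      IsDiffOp K i (LinearMap.mulLeft K r ∘ₗ u - u ∘ₗ LinearMap.mulLeft K r)

section Aux

variable {K A L : Type*} [Field K] [CommRing A] [Algebra K A]
  [CommRing L] [Algebra K L] [Algebra A L] [IsScalarTower K A L]

private lemma prod_update_pow {n : ℕ} (x : Fin n → A) (α : Fin n → ℕ) (k : Fin n) (m : ℕ) :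
    (∏ j, x j ^ Function.update α k m j)
      = x k ^ m * ∏ j ∈ Finset.univ.erase k, x j ^ α j := by
  rw [← Finset.mul_prod_erase Finset.univ _ (Finset.mem_univ k), Function.update_self]
  congr 1
  exact Finset.prod_congr rfl fun j hj => by
    rw [Function.update_of_ne (Finset.ne_of_mem_erase hj)]

private lemma prod_erase_pow {n : ℕ} (x : Fin n → A) (α : Fin n → ℕ) (k : Fin n) :
    (∏ j, x j ^ α j) = x k ^ α k * ∏ j ∈ Finset.univ.erase k, x j ^ α j :=
  (Finset.mul_prod_erase Finset.univ _ (Finset.mem_univ k)).symm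

private lemma sum_update_nat {n : ℕ} (α : Fin n → ℕ) (k : Fin n) (m : ℕ) :
    (∑ j, Function.update α k m j)
      = m + ∑ j ∈ Finset.univ.erase k, α j := by
  rw [← Finset.add_sum_erase Finset.univ _ (Finset.mem_univ k), Function.update_self]
  congr 1
  exact Finset.sum_congr rfl fun j hj => by
    rw [Function.update_of_ne (Finset.ne_of_mem_erase hj)]

private lemma sum_erase_nat {n : ℕ} (α : Fin n → ℕ) (k : Fin n) :
    (∑ j, α j) = α k + ∑ j ∈ Finset.univ.erase k, α j :=
  (Finset.add_sum_erase Finset.univ _ (Finset.mem_univ k)).symm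

/-- Main auxiliary lemma: if a differential operator of order `≤ i` on `L` sends the images of
all monomials of degree `≤ i` into the image of `A`, then it sends the images of all monomials
into the image of `A`. -/
private lemma diffop_monomials {n : ℕ} (x : Fin n → A) (i : ℕ) :
    ∀ δ : L →ₗ[K] L, IsDiffOp K i δ →
    (∀ α : Fin n → ℕ, (∑ k, α k) ≤ i →
      δ (algebraMap A L (∏ k, x k ^ α k)) ∈ Set.range (algebraMap A L)) →
    ∀ β : Fin n → ℕ,
      δ (algebraMap A L (∏ k, x k ^ β k)) ∈ Set.range (algebraMap A L) := by
  induction i with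
  | zero =>
    intro δ hδ h β
    obtain ⟨b, rfl⟩ := hδ
    obtain ⟨c, hc⟩ := h (fun _ => 0) (by simp)
    simp only [LinearMap.mulLeft_apply] at hc ⊢
    have h1 : (∏ k, x k ^ (0 : ℕ)) = (1 : A) := by simp
    rw [h1, map_one, mul_one] at hc
    exact ⟨c * ∏ k, x k ^ β k, by rw [map_mul, hc]⟩
  | succ i ih =>
    intro δ hδ h
    suffices H : ∀ N (β : Fin n → ℕ), (∑ k, β k) ≤ N →
        δ (algebraMap A L (∏ k, x k ^ β k)) ∈ Set.range (algebraMap A L) from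
      fun β => H _ β le_rfl
    intro N
    induction N with
    | zero => intro β hβ; exact h β (le_trans hβ (Nat.zero_le _))
    | succ N ihN =>
      intro β hβ
      by_cases hle : (∑ k, β k) ≤ i + 1
      · exact h β hle
      push_neg at hle
      have hβsum : (∑ k, β k) ≠ 0 := by omega
      obtain ⟨k, -, hk⟩ := Finset.exists_ne_zero_of_sum_ne_zero hβsum
      set γ : Fin n → ℕ := Function.update β k (β k - 1) with hγdef
      have hsumγ : (∑ j, γ j) + 1 = ∑ j, β j := by
        rw [hγdef, sum_update_nat, sum_erase_nat β k]; omega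
      have hprodβ : (∏ j, x j ^ β j) = x k * ∏ j, x j ^ γ j := by
        rw [hγdef, prod_update_pow, prod_erase_pow x β k, ← mul_assoc,
          ← pow_succ', Nat.sub_add_cancel (Nat.one_le_iff_ne_zero.mpr hk)]
      -- the commutator with multiplication by x k
      set r : L := algebraMap A L (x k) with hrdef
      set δ' : L →ₗ[K] L :=
        LinearMap.mulLeft K r ∘ₗ δ - δ ∘ₗ LinearMap.mulLeft K r with hδ'def
      have hδ' : IsDiffOp K i δ' := hδ r
      have hδ'app : ∀ y : L, δ' y = r * δ y - δ (r * y) := by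
        intro y
        simp [hδ'def, LinearMap.mulLeft_apply]
      have hmon' : ∀ α : Fin n → ℕ, (∑ j, α j) ≤ i →
          δ' (algebraMap A L (∏ j, x j ^ α j)) ∈ Set.range (algebraMap A L) := by
        intro α hα
        obtain ⟨c, hc⟩ := h α (by omega)
        have hsum' : (∑ j, Function.update α k (α k + 1) j) ≤ i + 1 := by
          rw [sum_update_nat, sum_erase_nat α k] at *
          omega
        obtain ⟨d, hd⟩ := h (Function.update α k (α k + 1)) hsum'
        have hprod' : (∏ j, x j ^ Function.update α k (α k + 1) j)
            = x k * ∏ j, x j ^ α j := by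
          rw [prod_update_pow, prod_erase_pow x α k, ← mul_assoc, ← pow_succ']
        rw [hprod'] at hd
        refine ⟨x k * c - d, ?_⟩
        rw [hδ'app, map_sub, map_mul, hc, hd, hrdef, ← map_mul]
      have hγmem := ihN γ (by omega)
      have hδ'γ := ih δ' hδ' hmon' γ
      obtain ⟨c, hc⟩ := hγmem
      obtain ⟨d, hd⟩ := hδ'γ
      refine ⟨x k * c - d, ?_⟩
      have key : δ (algebraMap A L (∏ j, x j ^ β j))
          = r * δ (algebraMap A L (∏ j, x j ^ γ j))
            - δ' (algebraMap A L (∏ j, x j ^ γ j)) := by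
        rw [hδ'app, hprodβ, map_mul, hrdef]
        ring
      rw [key, map_sub, map_mul, hc, hd, ← hrdef]

end Aux

/-- For a finitely generated domain `A = K⟨x₁,…,xₙ⟩` (char `K` = 0), `S` multiplicatively
closed with `0 ∉ S`, and `δ ∈ S⁻¹D(A)` of order at most `i`: `δ ∈ D(A)` (i.e. `δ(A) ⊆ A`)
iff `δ(x^α) ∈ A` for all multi-indices `α` with `|α| ≤ i`. -/
theorem stmt_16 {K A : Type*} [Field K] [CharZero K] [CommRing A] [IsDomain A] [Algebra K A]
    {n : ℕ} (x : Fin n → A) (hx : Algebra.adjoin K (Set.range x) = ⊤)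
    (S : Submonoid A) (hS : (0 : A) ∉ S)
    (i : ℕ) (δ : Localization S →ₗ[K] Localization S)
    (hδ : IsDiffOp K i δ) :
    (∀ a : A, δ (algebraMap A (Localization S) a) ∈
        Set.range (algebraMap A (Localization S))) ↔
    (∀ α : Fin n → ℕ, (∑ k, α k) ≤ i →
      δ (algebraMap A (Localization S) (∏ k, x k ^ α k)) ∈
        Set.range (algebraMap A (Localization S))) := by
  refine ⟨fun h α _ => h _, fun h a => ?_⟩
  have key : ∀ β : Fin n → ℕ,
      δ (algebraMap A (Localization S) (∏ k, x k ^ β k)) ∈ Set.range (algebraMap A (Localization S)) :=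
    diffop_monomials x i δ hδ h
  -- every element of `A` is a `K`-linear combination of monomials
  have hmem : a ∈ Submodule.span K ((Submonoid.closure (Set.range x) : Submonoid A) : Set A) := by
    rw [← Algebra.adjoin_eq_span, hx]
    exact Algebra.mem_top (R := K)
  have hsmul : ∀ (r : K) (b : A),
      algebraMap A (Localization S) (r • b) = r • algebraMap A (Localization S) b := by
    intro r b
    rw [Algebra.smul_def, Algebra.smul_def, map_mul, ← IsScalarTower.algebraMap_apply]
  induction hmem using Submodule.span_induction with
  | mem b hb =>
    -- b is a monomial
    replace hb : b ∈ Submonoid.closure (Set.range x) := hb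
    obtain ⟨β, rfl⟩ : ∃ β : Fin n → ℕ, (∏ k, x k ^ β k) = b := by
      induction hb using Submonoid.closure_induction with
      | mem y hy =>
        obtain ⟨k, rfl⟩ := hy
        exact ⟨Pi.single k 1, by
          rw [Finset.prod_eq_single k (fun j _ hj => by
            rw [Pi.single_eq_of_ne hj, pow_zero]) (fun hk => absurd (Finset.mem_univ k) hk)]
          rw [Pi.single_eq_same, pow_one]⟩
      | one => exact ⟨fun _ => 0, by simp⟩
      | mul y z _ _ hy hz =>
        obtain ⟨β₁, rfl⟩ := hy
        obtain ⟨β₂, rfl⟩ := hz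
        exact ⟨β₁ + β₂, by simp [pow_add, Finset.prod_mul_distrib]⟩
    exact key β
  | zero => exact ⟨0, by simp⟩
  | add y z _ _ hy hz =>
    obtain ⟨c, hc⟩ := hy
    obtain ⟨d, hd⟩ := hz
    exact ⟨c + d, by simp only [map_add]; rw [hc, hd]⟩
  | smul r y _ hy =>
    obtain ⟨c, hc⟩ := hy
    exact ⟨r • c, by rw [hsmul, hsmul, map_smul, hc]⟩
end

section
/- Let A be a commutative K-algebra which as an algebra is generated by A (degree 0 part) and finitely many derivations in the sense that 𝔇(A) = ∑ A·d_*⋯d_* where d_* range over finitely many derivations; then the associated graded algebra of 𝔇(A) with respect to the filtration by total degree in the derivations is commutative. Consequently, if A is Noetherian then 𝔇(A) is a (left and right) Noetherian ring. -/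
/-!
Let `F i` be the operators of degree `≤ i` in the `δ k`. Because `[δ k, φ a] ∈ φ(A)` and
`[δ k, δ l] ∈ F 1`, the Leibniz rule `[u, w δ] = [u, w] δ + w [u, δ]` and induction give
`[F i, F j] ⊆ F (i + j - 1)`. Hence the order of the factors in a monomial `φ a * δ^α` only
matters modulo lower degree, so `a X^α ↦ φ a * δ^α` is multiplicative modulo lower degree on
homogeneous polynomials of `A[X]`, and every element of `F n` agrees modulo `F (n - 1)` with the
image of a homogeneous polynomial of degree `n`, its leading symbol.

The leading symbols of a left ideal `I` form an ideal of `A[X]`, and this symbol ideal is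
strictly monotone in `I`: if `I ≤ J` have the same symbols, subtracting from `z ∈ J` an element of `I`
with the same symbol lowers its degree, so `z ∈ I` by induction. The Hilbert basis theorem
for `A[X]` then makes the operator algebra Noetherian.
-/

open MvPolynomial

namespace MvPolynomial

attribute [local instance] gradedAlgebra in
theorem homogeneousComponent_mul_of_isHomogeneous_left {σ S : Type*} [CommSemiring S]
    {q r : MvPolynomial σ S} {j : ℕ} (hq : q.IsHomogeneous j) (m : ℕ) :
    homogeneousComponent m (q * r) = if j ≤ m then q * homogeneousComponent (m - j) r else 0 := by
  simpa [← decomposition.decompose'_apply] using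
    DirectSum.coe_decompose_mul_of_left_mem (homogeneousSubmodule σ S) m hq

end MvPolynomial

theorem Finsupp.length_toList_toMultiset {ι : Type*} (α : ι →₀ ℕ) :
    (Finsupp.toMultiset α).toList.length = α.degree := by
  simp [Finsupp.degree_apply, Finsupp.sum]

section

variable {K A R ι : Type*} [CommRing K] [CommRing A] [Ring R] [Algebra K A] [Algebra K R]

def degLE (φ : A →ₐ[K] R) (δ : ι → R) : ℕ → Submodule K R
  | 0 => LinearMap.range φ.toLinearMap
  | i + 1 => degLE φ δ i ⊔ Submodule.span K {w | ∃ u ∈ degLE φ δ i, ∃ k, w = u * δ k}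

-- Degree `< n`; unlike `degLE φ δ (n - 1)`, this is `⊥` for `n = 0`.
def degLT (φ : A →ₐ[K] R) (δ : ι → R) : ℕ → Submodule K R
  | 0 => ⊥
  | n + 1 => degLE φ δ n

noncomputable def opMonomial (δ : ι → R) (α : ι →₀ ℕ) : R :=
  ((Finsupp.toMultiset α).toList.map δ).prod

noncomputable def evalOp (φ : A →ₐ[K] R) (δ : ι → R) : MvPolynomial ι A →ₗ[K] R :=
  Finsupp.lsum K (fun α => LinearMap.mulRight K (opMonomial δ α) ∘ₗ φ.toLinearMap) ∘ₗ
    (AddMonoidAlgebra.coeffLinearEquiv K).toLinearMap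

def opAlgebra (φ : A →ₐ[K] R) (δ : ι → R) : Subalgebra K R :=
  Algebra.adjoin K (Set.range φ ∪ Set.range δ)

def leadingSymbols (φ : A →ₐ[K] R) (δ : ι → R) (I : Ideal (opAlgebra φ δ)) (m : ℕ) :
    AddSubmonoid (MvPolynomial ι A) where
  carrier := {p | ∃ y ∈ I, (y : R) ∈ degLE φ δ m ∧ evalOp φ δ p - y ∈ degLT φ δ m}
  zero_mem' := ⟨0, I.zero_mem, zero_mem _, by simp⟩
  add_mem' := by
    rintro p q ⟨y, hy, hyF, hpy⟩ ⟨z, hz, hzF, hqz⟩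
    refine ⟨y + z, I.add_mem hy hz, add_mem hyF hzF, ?_⟩
    simpa [add_sub_add_comm] using add_mem hpy hqz

-- The span only makes this an ideal without further assumptions; under the hypotheses of
-- `mem_symbolIdeal_iff` it adds nothing.
noncomputable def symbolIdeal (φ : A →ₐ[K] R) (δ : ι → R) (I : Ideal (opAlgebra φ δ)) :
    Ideal (MvPolynomial ι A) :=
  Ideal.span {r | ∀ m, homogeneousComponent m r ∈ leadingSymbols φ δ I m}

theorem opMonomial_single_one (δ : ι → R) (k : ι) :
    opMonomial δ (Finsupp.single k 1) = δ k := by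
  simp [opMonomial]

theorem evalOp_monomial (φ : A →ₐ[K] R) (δ : ι → R) (α : ι →₀ ℕ) (a : A) :
    evalOp φ δ (monomial α a) = φ a * opMonomial δ α := by
  simp [evalOp, ← single_eq_monomial]

theorem evalOp_C (φ : A →ₐ[K] R) (δ : ι → R) (a : A) : evalOp φ δ (C a) = φ a := by
  rw [C_apply, evalOp_monomial]
  simp [opMonomial]

theorem evalOp_X (φ : A →ₐ[K] R) (δ : ι → R) (k : ι) : evalOp φ δ (X k) = δ k := by
  rw [X, evalOp_monomial, map_one, one_mul, opMonomial_single_one]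

variable (φ : A →ₐ[K] R) (δ : ι → R)

theorem degLE_mono : Monotone (degLE φ δ) :=
  monotone_nat_of_le_succ fun _ => le_sup_left

theorem algHom_mem_degLE_zero (a : A) : φ a ∈ degLE φ δ 0 := ⟨a, rfl⟩

theorem one_mem_degLE_zero : (1 : R) ∈ degLE φ δ 0 := by
  simpa using algHom_mem_degLE_zero φ δ 1

theorem mul_mem_degLE_succ {i : ℕ} {u : R} (hu : u ∈ degLE φ δ i) (k : ι) :
    u * δ k ∈ degLE φ δ (i + 1) :=
  le_sup_right (α := Submodule K R) (Submodule.subset_span ⟨u, hu, k, rfl⟩)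

theorem mem_degLE_one (k : ι) : δ k ∈ degLE φ δ 1 := by
  simpa using mul_mem_degLE_succ φ δ (one_mem_degLE_zero φ δ) k

theorem degLE_succ_le_comap {i : ℕ} {f : R →ₗ[K] R} {S : Submodule K R}
    (h₀ : ∀ v ∈ degLE φ δ i, f v ∈ S)
    (h₁ : ∀ u ∈ degLE φ δ i, ∀ k, f (u * δ k) ∈ S) :
    degLE φ δ (i + 1) ≤ S.comap f :=
  sup_le h₀ (Submodule.span_le.2 (by rintro _ ⟨u, hu, k, rfl⟩; exact h₁ u hu k))

theorem degLT_le_degLE : ∀ n, degLT φ δ n ≤ degLE φ δ n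
  | 0 => bot_le
  | n + 1 => degLE_mono φ δ n.le_succ

theorem degLT_le_degLE_pred : ∀ n, degLT φ δ n ≤ degLE φ δ (n - 1)
  | 0 => bot_le
  | _ + 1 => le_rfl

variable {φ δ}

theorem degLE_le_opAlgebra : ∀ n, degLE φ δ n ≤ Subalgebra.toSubmodule (opAlgebra φ δ)
  | 0 => by rintro _ ⟨a, rfl⟩; exact Algebra.subset_adjoin (Or.inl ⟨a, rfl⟩)
  | n + 1 => sup_le (degLE_le_opAlgebra n) <| Submodule.span_le.2 <| by
      rintro _ ⟨u, hu, k, rfl⟩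
      exact (opAlgebra φ δ).mul_mem (degLE_le_opAlgebra n hu)
        (Algebra.subset_adjoin (Or.inr ⟨k, rfl⟩))

theorem leadingSymbols_mono {I J : Ideal (opAlgebra φ δ)} (h : I ≤ J) (m : ℕ) :
    leadingSymbols φ δ I m ≤ leadingSymbols φ δ J m := by
  rintro p ⟨y, hy, hyF, hpy⟩
  exact ⟨y, h hy, hyF, hpy⟩

theorem symbolIdeal_mono : Monotone (symbolIdeal φ δ) := fun _ _ h =>
  Ideal.span_mono fun _ hr m => leadingSymbols_mono h m (hr m)

variable (hδ : ∀ k a, δ k * φ a - φ a * δ k ∈ degLE φ δ 0)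
include hδ

theorem mul_algHom_mem_degLE :
    ∀ {i : ℕ} {u : R}, u ∈ degLE φ δ i → ∀ a, u * φ a ∈ degLE φ δ i
  | 0, _, ⟨b, rfl⟩, a => by simpa using algHom_mem_degLE_zero φ δ (b * a)
  | i + 1, _, hu, a => by
    refine degLE_succ_le_comap φ δ (f := LinearMap.mulRight K (φ a))
      (fun v hv => degLE_mono φ δ i.le_succ (mul_algHom_mem_degLE hv a)) (fun v hv k => ?_) hu
    obtain ⟨b, hb⟩ := hδ k a
    have h : v * δ k * φ a = v * φ a * δ k + v * φ b := by
      rw [AlgHom.toLinearMap_apply] at hb; rw [hb]; noncomm_ring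
    simp only [LinearMap.mulRight_apply, h]
    exact add_mem (mul_mem_degLE_succ φ δ (mul_algHom_mem_degLE hv a) k)
      (degLE_mono φ δ i.le_succ (mul_algHom_mem_degLE hv b))

theorem mul_mem_degLE : ∀ {j i : ℕ} {u v : R}, u ∈ degLE φ δ i → v ∈ degLE φ δ j →
    u * v ∈ degLE φ δ (i + j)
  | 0, _, _, _, hu, ⟨b, rfl⟩ => mul_algHom_mem_degLE hδ hu b
  | j + 1, i, u, _, hu, hv => by
    refine degLE_succ_le_comap φ δ (f := LinearMap.mulLeft K u) (S := degLE φ δ (i + j + 1))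
      (fun v hv => degLE_mono φ δ (i + j).le_succ (mul_mem_degLE hu hv))
      (fun w hw k => ?_) hv
    simpa only [LinearMap.mulLeft_apply, ← mul_assoc] using
      mul_mem_degLE_succ φ δ (mul_mem_degLE hu hw) k

theorem mul_mem_degLT_left {i j : ℕ} {u v : R} (hu : u ∈ degLT φ δ i)
    (hv : v ∈ degLE φ δ j) :
    u * v ∈ degLT φ δ (i + j) := by
  cases i with
  | zero => simp_all [degLT]
  | succ i => rw [Nat.add_right_comm]; exact mul_mem_degLE hδ hu hv

theorem mul_mem_degLT_right {i j : ℕ} {u v : R} (hu : u ∈ degLE φ δ i)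
    (hv : v ∈ degLT φ δ j) :
    u * v ∈ degLT φ δ (i + j) := by
  cases j with
  | zero => simp_all [degLT]
  | succ j => exact mul_mem_degLE hδ hu hv

theorem algHom_commutator_mem_degLT :
    ∀ {j : ℕ} {v : R}, v ∈ degLE φ δ j → ∀ a, φ a * v - v * φ a ∈ degLT φ δ j
  | 0, _, ⟨b, rfl⟩, a => by simp [degLT, ← map_mul, mul_comm]
  | j + 1, _, hv, a => by
    refine degLE_succ_le_comap φ δ (S := degLE φ δ j)
      (f := LinearMap.mulLeft K (φ a) - LinearMap.mulRight K (φ a))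
      (fun v hv => degLT_le_degLE φ δ j (algHom_commutator_mem_degLT hv a))
      (fun w hw k => ?_) hv
    have h : φ a * (w * δ k) - w * δ k * φ a
        = (φ a * w - w * φ a) * δ k - w * (δ k * φ a - φ a * δ k) := by noncomm_ring
    obtain ⟨b, hb⟩ := hδ k a
    rw [AlgHom.toLinearMap_apply] at hb
    simp only [LinearMap.sub_apply, LinearMap.mulLeft_apply, LinearMap.mulRight_apply, h, ← hb]
    exact sub_mem
      (mul_mem_degLT_left hδ (algHom_commutator_mem_degLT hw a) (mem_degLE_one φ δ k))
      (mul_algHom_mem_degLE hδ hw b)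

theorem list_prod_mem_degLE : ∀ l : List ι, (l.map δ).prod ∈ degLE φ δ l.length
  | [] => one_mem_degLE_zero φ δ
  | k :: l => by
    simpa [Nat.add_comm 1] using mul_mem_degLE hδ (mem_degLE_one φ δ k) (list_prod_mem_degLE l)

theorem opMonomial_mem_degLE (α : ι →₀ ℕ) : opMonomial δ α ∈ degLE φ δ α.degree := by
  rw [opMonomial, ← Finsupp.length_toList_toMultiset]
  exact list_prod_mem_degLE hδ _

theorem exists_mem_degLE_of_mem_opAlgebra {x : R} (hx : x ∈ opAlgebra φ δ) :
    ∃ n, x ∈ degLE φ δ n := by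
  induction hx using Algebra.adjoin_induction with
  | mem x hx =>
    rcases hx with ⟨a, rfl⟩ | ⟨k, rfl⟩
    exacts [⟨0, algHom_mem_degLE_zero φ δ a⟩, ⟨1, mem_degLE_one φ δ k⟩]
  | algebraMap c => exact ⟨0, by simpa using algHom_mem_degLE_zero φ δ (algebraMap K A c)⟩
  | add x y _ _ hx hy =>
    obtain ⟨i, hi⟩ := hx
    obtain ⟨j, hj⟩ := hy
    exact ⟨max i j, add_mem (degLE_mono φ δ (le_max_left i j) hi)
      (degLE_mono φ δ (le_max_right i j) hj)⟩
  | mul x y _ _ hx hy =>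
    obtain ⟨i, hi⟩ := hx
    obtain ⟨j, hj⟩ := hy
    exact ⟨i + j, mul_mem_degLE hδ hi hj⟩

theorem evalOp_mem_degLE {p : MvPolynomial ι A} {n : ℕ} (hp : p.IsHomogeneous n) :
    evalOp φ δ p ∈ degLE φ δ n := by
  rw [p.as_sum, map_sum]
  refine Submodule.sum_mem _ fun α hα => ?_
  have hα : α.degree = n := (hp.degree_eq_sum_deg_support hα).symm
  simpa [evalOp_monomial, hα] using
    mul_mem_degLE hδ (algHom_mem_degLE_zero φ δ (coeff α p)) (opMonomial_mem_degLE hδ α)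

variable (hbr : ∀ k l, δ k * δ l - δ l * δ k ∈ degLE φ δ 1)
include hbr

theorem commutator_mem_degLE :
    ∀ {i : ℕ} {u : R}, u ∈ degLE φ δ i → ∀ k, u * δ k - δ k * u ∈ degLE φ δ i
  | 0, _, ⟨a, rfl⟩, k => by simpa using neg_mem (hδ k a)
  | i + 1, _, hu, k => by
    refine degLE_succ_le_comap φ δ (S := degLE φ δ (i + 1))
      (f := LinearMap.mulRight K (δ k) - LinearMap.mulLeft K (δ k))
      (fun v hv => degLE_mono φ δ i.le_succ (commutator_mem_degLE hv k))
      (fun w hw l => ?_) hu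
    have h : w * δ l * δ k - δ k * (w * δ l)
        = w * (δ l * δ k - δ k * δ l) + (w * δ k - δ k * w) * δ l := by noncomm_ring
    simp only [LinearMap.sub_apply, LinearMap.mulLeft_apply, LinearMap.mulRight_apply, h]
    exact add_mem (mul_mem_degLE hδ hw (hbr l k))
      (mul_mem_degLE_succ φ δ (commutator_mem_degLE hw k) l)

theorem commutator_mem_degLT :
    ∀ {j i : ℕ} {u v : R}, u ∈ degLE φ δ i → v ∈ degLE φ δ j →
      u * v - v * u ∈ degLT φ δ (i + j)
  | 0, _, _, _, hu, ⟨a, rfl⟩ => by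
    simpa using neg_mem (algHom_commutator_mem_degLT hδ hu a)
  | j + 1, i, u, _, hu, hv => by
    refine degLE_succ_le_comap φ δ (S := degLE φ δ (i + j))
      (f := LinearMap.mulLeft K u - LinearMap.mulRight K u)
      (fun v hv => degLT_le_degLE φ δ _ (commutator_mem_degLT hu hv))
      (fun w hw k => ?_) hv
    have h : u * (w * δ k) - w * δ k * u
        = (u * w - w * u) * δ k + w * (u * δ k - δ k * u) := by noncomm_ring
    simp only [LinearMap.sub_apply, LinearMap.mulLeft_apply, LinearMap.mulRight_apply, h]
    refine add_mem (mul_mem_degLT_left hδ (commutator_mem_degLT hu hw) (mem_degLE_one φ δ k)) ?_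
    rw [Nat.add_comm i]
    exact mul_mem_degLE hδ hw (commutator_mem_degLE hδ hbr hu k)

theorem list_prod_sub_mem_degLT_of_perm {l l' : List ι} (h : l.Perm l') :
    (l.map δ).prod - (l'.map δ).prod ∈ degLT φ δ l.length := by
  induction h with
  | nil => simp
  | @cons k l₁ l₂ _ ih =>
    simpa [← mul_sub, Nat.add_comm 1] using mul_mem_degLT_right hδ (mem_degLE_one φ δ k) ih
  | swap k l l₁ =>
    have h := mul_mem_degLE hδ (hbr l k) (list_prod_mem_degLE hδ l₁)
    simp only [List.map_cons, List.prod_cons, List.length_cons, ← mul_assoc, ← sub_mul]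
    rwa [Nat.add_comm 1] at h
  | @trans l₁ l₂ l₃ h₁₂ _ ih₁₂ ih₂₃ =>
    rw [← sub_add_sub_cancel _ ((l₂.map δ).prod)]
    exact add_mem ih₁₂ (h₁₂.length_eq ▸ ih₂₃)

theorem opMonomial_add_sub_mem_degLT (α β : ι →₀ ℕ) :
    opMonomial δ (α + β) - opMonomial δ α * opMonomial δ β
      ∈ degLT φ δ (α.degree + β.degree) := by
  have hperm : (Finsupp.toMultiset (α + β)).toList.Perm
      ((Finsupp.toMultiset α).toList ++ (Finsupp.toMultiset β).toList) := by
    rw [← Multiset.coe_eq_coe, ← Multiset.coe_add]; simp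
  have h := list_prod_sub_mem_degLT_of_perm hδ hbr hperm
  rwa [List.map_append, List.prod_append, Finsupp.length_toList_toMultiset, map_add] at h

theorem evalOp_monomial_mul_sub_mem_degLT (β α : ι →₀ ℕ) (b a : A) :
    evalOp φ δ (monomial β b * monomial α a)
        - evalOp φ δ (monomial β b) * evalOp φ δ (monomial α a)
      ∈ degLT φ δ (β.degree + α.degree) := by
  have h : φ (b * a) * opMonomial δ (β + α)
        - φ b * opMonomial δ β * (φ a * opMonomial δ α)
      = φ b * φ a * (opMonomial δ (β + α) - opMonomial δ β * opMonomial δ α)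
        - φ b * (opMonomial δ β * φ a - φ a * opMonomial δ β) * opMonomial δ α := by
    rw [map_mul]; noncomm_ring
  rw [monomial_mul, evalOp_monomial, evalOp_monomial, evalOp_monomial, h]
  refine sub_mem ?_ ?_
  · simpa using mul_mem_degLT_right hδ (algHom_mem_degLE_zero φ δ (b * a))
      (opMonomial_add_sub_mem_degLT hδ hbr β α)
  · have hc := commutator_mem_degLT hδ hbr (opMonomial_mem_degLE hδ β)
      (algHom_mem_degLE_zero φ δ a)
    simpa [mul_assoc] using mul_mem_degLT_left hδ
      (mul_mem_degLT_right hδ (algHom_mem_degLE_zero φ δ b) hc) (opMonomial_mem_degLE hδ α)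

theorem evalOp_mul_sub_mem_degLT {q p : MvPolynomial ι A} {j i : ℕ}
    (hq : q.IsHomogeneous j) (hp : p.IsHomogeneous i) :
    evalOp φ δ (q * p) - evalOp φ δ q * evalOp φ δ p ∈ degLT φ δ (j + i) := by
  have h : evalOp φ δ (q * p) - evalOp φ δ q * evalOp φ δ p
      = ∑ β ∈ q.support, ∑ α ∈ p.support,
          (evalOp φ δ (monomial β (coeff β q) * monomial α (coeff α p))
            - evalOp φ δ (monomial β (coeff β q))
              * evalOp φ δ (monomial α (coeff α p))) := by
    conv_lhs => rw [q.as_sum, p.as_sum]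
    simp only [Finset.sum_mul_sum, map_sum, Finset.sum_sub_distrib]
  rw [h]
  refine Submodule.sum_mem _ fun β hβ => Submodule.sum_mem _ fun α hα => ?_
  rw [hq.degree_eq_sum_deg_support hβ, hp.degree_eq_sum_deg_support hα]
  exact evalOp_monomial_mul_sub_mem_degLT hδ hbr β α _ _

theorem degLE_le_degLT_sup_map_evalOp : ∀ n, degLE φ δ n ≤
    degLT φ δ n ⊔ ((homogeneousSubmodule ι A n).restrictScalars K).map (evalOp φ δ)
  | 0 => by
    rintro _ ⟨a, rfl⟩
    exact Submodule.mem_sup_right ⟨C a, isHomogeneous_C ι a, evalOp_C φ δ a⟩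
  | n + 1 => degLE_succ_le_comap φ δ (f := LinearMap.id) (fun v hv => Submodule.mem_sup_left hv)
    fun u hu k => by
      obtain ⟨y, hy, _, ⟨p, hp, rfl⟩, rfl⟩ :=
        Submodule.mem_sup.1 (degLE_le_degLT_sup_map_evalOp n hu)
      have h : (y + evalOp φ δ p) * δ k
          = (y * δ k - (evalOp φ δ (p * X k) - evalOp φ δ p * evalOp φ δ (X k)))
            + evalOp φ δ (p * X k) := by
        rw [evalOp_X]; noncomm_ring
      rw [LinearMap.id_apply, h]
      exact Submodule.add_mem_sup
        (sub_mem (mul_mem_degLT_left hδ hy (mem_degLE_one φ δ k))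
          (evalOp_mul_sub_mem_degLT hδ hbr hp (isHomogeneous_X A k)))
        ⟨p * X k, hp.mul (isHomogeneous_X A k), rfl⟩

theorem mul_mem_leadingSymbols {I : Ideal (opAlgebra φ δ)}
    {q p : MvPolynomial ι A} {j n : ℕ} (hq : q.IsHomogeneous j) (hp : p.IsHomogeneous n)
    (h : p ∈ leadingSymbols φ δ I n) : q * p ∈ leadingSymbols φ δ I (j + n) := by
  obtain ⟨y, hy, hyF, hpy⟩ := h
  have hq' := evalOp_mem_degLE hδ hq
  refine ⟨⟨evalOp φ δ q, degLE_le_opAlgebra j hq'⟩ * y, I.smul_mem _ hy,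
    mul_mem_degLE hδ hq' hyF, ?_⟩
  have h : evalOp φ δ (q * p) - evalOp φ δ q * y
      = (evalOp φ δ (q * p) - evalOp φ δ q * evalOp φ δ p)
        + evalOp φ δ q * (evalOp φ δ p - y) := by
    noncomm_ring
  rw [Subalgebra.coe_mul, h]
  exact add_mem (evalOp_mul_sub_mem_degLT hδ hbr hq hp) (mul_mem_degLT_right hδ hq' hpy)

theorem mem_symbolIdeal_iff {I : Ideal (opAlgebra φ δ)}
    {r : MvPolynomial ι A} :
    r ∈ symbolIdeal φ δ I ↔ ∀ m, homogeneousComponent m r ∈ leadingSymbols φ δ I m := by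
  refine ⟨fun hr => ?_, fun hr => Ideal.subset_span hr⟩
  induction hr using Submodule.span_induction with
  | mem r hr => exact hr
  | zero => simp [zero_mem]
  | add r s _ _ hr hs => simpa using fun m => add_mem (hr m) (hs m)
  | smul c r _ hr =>
    intro m
    rw [smul_eq_mul]
    induction c using MvPolynomial.induction_on' with
    | monomial β b =>
      rw [homogeneousComponent_mul_of_isHomogeneous_left (isHomogeneous_monomial b rfl)]
      split_ifs with hβ
      · simpa [Nat.add_sub_cancel' hβ] using mul_mem_leadingSymbols hδ hbr
          (isHomogeneous_monomial (d := β) b rfl) (homogeneousComponent_isHomogeneous _ r)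
          (hr (m - β.degree))
      · exact zero_mem _
    | add c c' hc hc' => simpa [add_mul] using add_mem hc hc'

theorem mem_symbolIdeal_iff_of_isHomogeneous {I : Ideal (opAlgebra φ δ)}
    {p : MvPolynomial ι A} {n : ℕ} (hp : p.IsHomogeneous n) :
    p ∈ symbolIdeal φ δ I ↔ p ∈ leadingSymbols φ δ I n := by
  rw [mem_symbolIdeal_iff hδ hbr]
  refine ⟨fun h => homogeneousComponent_eq_self hp ▸ h n, fun h m => ?_⟩
  rw [homogeneousComponent_of_mem hp]
  split_ifs with hm
  · exact hm ▸ h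
  · exact zero_mem _

theorem le_of_symbolIdeal_le {I J : Ideal (opAlgebra φ δ)} (hIJ : I ≤ J)
    (hS : symbolIdeal φ δ J ≤ symbolIdeal φ δ I) : J ≤ I := by
  suffices H : ∀ n, ∀ z ∈ J, (z : R) ∈ degLT φ δ n → z ∈ I by
    intro z hz
    obtain ⟨n, hn⟩ := exists_mem_degLE_of_mem_opAlgebra hδ z.2
    exact H (n + 1) z hz hn
  intro n
  induction n with
  | zero =>
    intro z _ hz
    rw [show z = 0 from Subtype.ext (by simpa [degLT] using hz)]
    exact zero_mem I
  | succ n ih =>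
    intro z hzJ hz
    obtain ⟨y', hy', _, ⟨p, hp, rfl⟩, hz'⟩ :=
      Submodule.mem_sup.1 (degLE_le_degLT_sup_map_evalOp hδ hbr n hz)
    have hpJ : p ∈ leadingSymbols φ δ J n :=
      ⟨z, hzJ, hz, by simpa [← hz'] using neg_mem hy'⟩
    obtain ⟨y, hyI, -, hpy⟩ := (mem_symbolIdeal_iff_of_isHomogeneous hδ hbr hp).1
      (hS ((mem_symbolIdeal_iff_of_isHomogeneous hδ hbr hp).2 hpJ))
    have hzy : z - y ∈ I := ih _ (sub_mem hzJ (hIJ hyI)) (by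
      simpa [← hz', add_sub_assoc] using add_mem hy' hpy)
    simpa using add_mem hzy hyI

theorem symbolIdeal_strictMono : StrictMono (symbolIdeal φ δ) := fun _ _ hIJ =>
  lt_of_le_not_ge (symbolIdeal_mono hIJ.le) fun h =>
    hIJ.not_ge (le_of_symbolIdeal_le hδ hbr hIJ.le h)

theorem isNoetherianRing_opAlgebra [Finite ι] [IsNoetherianRing A] :
    IsNoetherianRing (opAlgebra φ δ) :=
  isNoetherian_iff'.2 (symbolIdeal_strictMono hδ hbr).wellFoundedGT

end

/-- Let `𝔇(A)` be the subalgebra of `End_K(A)` generated by the multiplication operators and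
finitely many derivations `d₁,…,d_s` (whose pairwise brackets lie back in filtration
degree `≤ 1`, as `[∂ᵢ,a] = ∂ᵢ(a) ∈ A` and `[der,der] ⊆ A·der` do in the paper's setting),
filtered by `F i` = total degree `≤ i` in the derivations. Then the associated graded
algebra is commutative: `[F i, F j] ⊆ F (i+j-1)`; consequently, if `A` is Noetherian then
`𝔇(A)` is a (left and right) Noetherian ring. -/
theorem stmt_18 {K A : Type*} [Field K] [CommRing A] [Algebra K A] [IsNoetherianRing A]
    {s : ℕ} (d : Fin s → Derivation K A A)
    (F : ℕ → Submodule K (Module.End K A))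
    (hF0 : F 0 = LinearMap.range (Algebra.lmul K A).toLinearMap)
    (hFsucc : ∀ i : ℕ, F (i + 1) = F i ⊔ Submodule.span K
      {w : Module.End K A | ∃ u ∈ F i, ∃ k : Fin s, w = u * (d k).toLinearMap})
    (hbr : ∀ k l : Fin s,
      (d k).toLinearMap * (d l).toLinearMap - (d l).toLinearMap * (d k).toLinearMap ∈ F 1) :
    (∀ (i j : ℕ), ∀ u ∈ F i, ∀ v ∈ F j, u * v - v * u ∈ F (i + j - 1)) ∧
    IsNoetherianRing (Algebra.adjoin K
      (Set.range ⇑(Algebra.lmul K A) ∪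
        Set.range (fun k : Fin s => (d k).toLinearMap))) := by
  obtain rfl : F = degLE (Algebra.lmul K A) (fun k => (d k).toLinearMap) := by
    funext i
    induction i with
    | zero => exact hF0
    | succ i ih => rw [hFsucc, ih]; rfl
  have hδ : ∀ k a,
      (d k).toLinearMap * Algebra.lmul K A a - Algebra.lmul K A a * (d k).toLinearMap
        ∈ degLE (Algebra.lmul K A) (fun k => (d k).toLinearMap) 0 := fun k a =>
    ⟨d k a, LinearMap.ext fun x => by simp [Derivation.leibniz, mul_comm]⟩
  exact ⟨fun i j u hu v hv => degLT_le_degLE_pred _ _ _ (commutator_mem_degLT hδ hbr hu hv),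
    isNoetherianRing_opAlgebra hδ hbr⟩
end
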